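/- The set of real N×M matrices of rank at most r is closed in ℝ^{N×M}, but for tensors: there exists a sequence of order-3 real tensors each of rank at most 2 whose limit has rank 3. Hence the set {T ∈ ℝ^{n×n×n} : rank(T) ≤ r} is in general not closed. -/

import Mathlib

open Filter Matrix

/-- CP rank ≤ r for an order-3 tensor over ℝ. -/
def tensorRankLe (r n : ℕ) (T : Fin n → Fin n → Fin n → ℝ) : Prop :=
  ∃ u v w : Fin r → Fin n → ℝ,
    ∀ a b c, T a b c = ∑ ℓ, u ℓ a * v ℓ b * w ℓ c

/-- From a family spanning a space of dimension ≥ k, one can extract k linearly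
independent members. -/
lemma pick_li {m : Type*} {V : Type*} [AddCommGroup V] [Module ℝ V] [FiniteDimensional ℝ V]
    (v : m → V) (k : ℕ) (hk : k ≤ Module.finrank ℝ (Submodule.span ℝ (Set.range v))) :
    ∃ g : Fin k → m, LinearIndependent ℝ (v ∘ g) := by
  induction k with
  | zero => exact ⟨Fin.elim0, linearIndependent_empty_type⟩
  | succ k ih =>
    obtain ⟨g, hg⟩ := ih (le_trans (Nat.le_succ k) hk)
    have hex : ∃ i, v i ∉ Submodule.span ℝ (Set.range (v ∘ g)) := by
      by_contra hcon
      push_neg at hcon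
      have hle : Submodule.span ℝ (Set.range v) ≤ Submodule.span ℝ (Set.range (v ∘ g)) :=
        Submodule.span_le.mpr (by rintro _ ⟨i, rfl⟩; exact hcon i)
      have h1 : Module.finrank ℝ (Submodule.span ℝ (Set.range v)) ≤
          Module.finrank ℝ (Submodule.span ℝ (Set.range (v ∘ g))) :=
        Submodule.finrank_mono hle
      have h2 : Module.finrank ℝ (Submodule.span ℝ (Set.range (v ∘ g))) = k := by
        rw [finrank_span_eq_card hg, Fintype.card_fin]
      omega
    obtain ⟨i, hi⟩ := hex
    refine ⟨Fin.snoc g i, ?_⟩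
    rw [Fin.comp_snoc]
    exact linearIndependent_fin_snoc.mpr ⟨hg, hi⟩

/-- Rank at most `r` iff all `(r+1)`-minors vanish. -/
lemma rank_le_iff_det {N M : ℕ} (r : ℕ) (A : Matrix (Fin N) (Fin M) ℝ) :
    A.rank ≤ r ↔ ∀ (f : Fin (r+1) → Fin N) (g : Fin (r+1) → Fin M),
      (A.submatrix f g).det = 0 := by
  constructor
  · intro h f g
    by_contra hdet
    have hunit : IsUnit (A.submatrix f g) :=
      (Matrix.isUnit_iff_isUnit_det _).mpr (isUnit_iff_ne_zero.mpr hdet)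
    have h1 : (A.submatrix f g).rank = r + 1 := by
      rw [Matrix.rank_of_isUnit _ hunit, Fintype.card_fin]
    have h2 : (A.submatrix f g).rank ≤ A.rank := by
      have hEq : A.submatrix f g =
          (Matrix.of fun i j => if f i = j then (1:ℝ) else 0) * A *
            (Matrix.of fun i j => if i = g j then (1:ℝ) else 0) := by
        ext i j
        simp [Matrix.mul_apply, ite_mul, mul_ite, Finset.sum_ite_eq, Finset.sum_ite_eq']
      rw [hEq]
      exact le_trans (Matrix.rank_mul_le_left _ _) (Matrix.rank_mul_le_right _ _)
    omega
  · intro h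
    by_contra hrank
    push_neg at hrank
    have hcols : r + 1 ≤ Module.finrank ℝ (Submodule.span ℝ (Set.range Aᵀ)) := by
      rw [show Aᵀ = A.col from rfl, ← Matrix.rank_eq_finrank_span_cols]; omega
    obtain ⟨g, hg⟩ := pick_li Aᵀ (r+1) hcols
    set B := A.submatrix id g with hBdef
    have hBt : Bᵀ = Aᵀ ∘ g := rfl
    have hrB : B.rank = r + 1 := by
      rw [Matrix.rank_eq_finrank_span_cols, Matrix.col, hBt, finrank_span_eq_card hg, Fintype.card_fin]
    have hrBt : Bᵀ.rank = r + 1 := by rw [Matrix.rank_transpose, hrB]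
    have hrows : r + 1 ≤ Module.finrank ℝ (Submodule.span ℝ (Set.range B)) := by
      have h3 := Matrix.rank_eq_finrank_span_cols Bᵀ
      rw [Matrix.col, Matrix.transpose_transpose] at h3
      rw [← h3, hrBt]
    obtain ⟨f, hf⟩ := pick_li B (r+1) hrows
    have hS : LinearIndependent ℝ (fun i => (A.submatrix f g) i) := hf
    have hunit : IsUnit (A.submatrix f g) :=
      Matrix.linearIndependent_rows_iff_isUnit.mp hS
    have hdet : (A.submatrix f g).det ≠ 0 := by
      intro h0
      have := (Matrix.isUnit_iff_isUnit_det _).mp hunit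
      rw [h0] at this
      simp at this
    exact hdet (h f g)

/-- The key algebraic fact behind Bini's example: the limit tensor has rank `> 2`. -/
lemma bini_key (a A b B c C d D e E f F : ℝ)
    (h1 : a*c*e + A*C*E = 0)
    (h2 : a*c*f + A*C*F = 1)
    (h3 : a*d*e + A*D*E = 1)
    (h4 : a*d*f + A*D*F = 0)
    (h5 : b*c*e + B*C*E = 1)
    (h6 : b*c*f + B*C*F = 0)
    (h7 : b*d*e + B*D*E = 0)
    (h8 : b*d*f + B*D*F = 0) : False := by
  have H1 : a*A*(e*F - f*E)*(d*C - c*D) = 1 := by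
    linear_combination (a*c*f + A*C*F)*h3 + h2 - (a*c*e + A*C*E)*h4
  have H5 : b*B*(e*F - f*E)*(d*C - c*D) = 0 := by
    linear_combination (b*c*f + B*C*F)*h7 - (b*c*e + B*C*E)*h8
  have hbB : b*B = 0 := by linear_combination a*A*H5 - b*B*H1
  rcases mul_eq_zero.mp hbB with hb | hB
  · subst hb
    have hF : F = 0 := by linear_combination E*h6 - F*h5
    subst hF
    have hD : D = 0 := by linear_combination C*h7 - D*h5
    subst hD
    have hd : d = 0 := by linear_combination c*h4 - d*h2
    subst hd
    have : (0:ℝ) = 1 := by linear_combination H1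
    exact zero_ne_one this
  · subst hB
    have hf : f = 0 := by linear_combination e*h6 - f*h5
    subst hf
    have hd : d = 0 := by linear_combination c*h7 - d*h5
    subst hd
    have hD : D = 0 := by linear_combination C*h4 - D*h2
    subst hD
    have : (0:ℝ) = 1 := by linear_combination H1
    exact zero_ne_one this

noncomputable section BiniExample

/-- first standard basis vector of `ℝ²` -/
def ee0 : Fin 2 → ℝ := ![1, 0]
/-- second standard basis vector of `ℝ²` -/
def ee1 : Fin 2 → ℝ := ![0, 1]

/-- the limit tensor `e0⊗e0⊗e1 + e0⊗e1⊗e0 + e1⊗e0⊗e0` -/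
def TlimB : Fin 2 → Fin 2 → Fin 2 → ℝ :=
  fun a b c => ee0 a * ee0 b * ee1 c + ee0 a * ee1 b * ee0 c + ee1 a * ee0 b * ee0 c

/-- the approximating sequence of rank-2 tensors -/
def TseqB : ℕ → Fin 2 → Fin 2 → Fin 2 → ℝ :=
  fun n a b c =>
    ((n:ℝ)+1) * ((ee0 a + ee1 a / ((n:ℝ)+1)) * (ee0 b + ee1 b / ((n:ℝ)+1)) *
        (ee0 c + ee1 c / ((n:ℝ)+1)))
      - ((n:ℝ)+1) * (ee0 a * ee0 b * ee0 c)

end BiniExample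


lemma tseqB_rank (n : ℕ) : tensorRankLe 2 2 (TseqB n) := by
  refine ⟨![fun i => ((n:ℝ)+1) * (ee0 i + ee1 i / ((n:ℝ)+1)),
            fun i => -(((n:ℝ)+1) * ee0 i)],
          ![fun i => ee0 i + ee1 i / ((n:ℝ)+1), ee0],
          ![fun i => ee0 i + ee1 i / ((n:ℝ)+1), ee0], ?_⟩
  intro a b c
  simp only [Fin.sum_univ_two, Matrix.cons_val_zero, Matrix.cons_val_one, Matrix.head_cons]
  show TseqB n a b c = _
  unfold TseqB
  ring

lemma tseqB_tendsto : Tendsto TseqB atTop (nhds TlimB) := by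
  rw [tendsto_pi_nhds]
  intro a
  rw [tendsto_pi_nhds]
  intro b
  rw [tendsto_pi_nhds]
  intro c
  have hkey : ∀ n : ℕ, TseqB n a b c = TlimB a b c
      + (ee0 a * ee1 b * ee1 c + ee1 a * ee0 b * ee1 c + ee1 a * ee1 b * ee0 c)
          * (1/((n:ℝ)+1))
      + (ee1 a * ee1 b * ee1 c) * (1/((n:ℝ)+1) * (1/((n:ℝ)+1))) := by
    intro n
    have hn : ((n:ℝ)+1) ≠ 0 := by positivity
    unfold TseqB TlimB
    field_simp
    ring
  have h0 : Tendsto (fun n : ℕ => 1/((n:ℝ)+1)) atTop (nhds 0) :=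
    tendsto_one_div_add_atTop_nhds_zero_nat
  have hT : Tendsto (fun n : ℕ => TlimB a b c
      + (ee0 a * ee1 b * ee1 c + ee1 a * ee0 b * ee1 c + ee1 a * ee1 b * ee0 c)
          * (1/((n:ℝ)+1))
      + (ee1 a * ee1 b * ee1 c) * (1/((n:ℝ)+1) * (1/((n:ℝ)+1)))) atTop
      (nhds (TlimB a b c
        + (ee0 a * ee1 b * ee1 c + ee1 a * ee0 b * ee1 c + ee1 a * ee1 b * ee0 c) * 0
        + (ee1 a * ee1 b * ee1 c) * (0 * 0))) :=
    (tendsto_const_nhds.add (h0.const_mul _)).add ((h0.mul h0).const_mul _)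
  simp only [mul_zero, zero_mul, add_zero] at hT
  exact (funext hkey : (fun n => TseqB n a b c) = _) ▸ hT

lemma tlimB_rank3 : tensorRankLe 3 2 TlimB := by
  refine ⟨![ee0, ee0, ee1], ![ee0, ee1, ee0], ![ee1, ee0, ee0], ?_⟩
  intro a b c
  simp only [Fin.sum_univ_three, Matrix.cons_val_zero, Matrix.cons_val_one, Matrix.head_cons,
    Matrix.cons_val_two, Matrix.tail_cons]
  rfl

lemma tlimB_not_rank2 : ¬ tensorRankLe 2 2 TlimB := by
  rintro ⟨u, v, w, h⟩
  have e00 : ee0 0 = 1 := rfl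
  have e01 : ee0 1 = 0 := rfl
  have e10 : ee1 0 = 0 := rfl
  have e11 : ee1 1 = 1 := rfl
  have h1 := h 0 0 0
  have h2 := h 0 0 1
  have h3 := h 0 1 0
  have h4 := h 0 1 1
  have h5 := h 1 0 0
  have h6 := h 1 0 1
  have h7 := h 1 1 0
  have h8 := h 1 1 1
  simp only [TlimB, Fin.sum_univ_two, e00, e01, e10, e11] at h1 h2 h3 h4 h5 h6 h7 h8
  norm_num at h1 h2 h3 h4 h5 h6 h7 h8
  exact bini_key (u 0 0) (u 1 0) (u 0 1) (u 1 1) (v 0 0) (v 1 0) (v 0 1) (v 1 1)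
    (w 0 0) (w 1 0) (w 0 1) (w 1 1)
    (by linarith [h1]) (by linarith [h2]) (by linarith [h3]) (by linarith [h4])
    (by linarith [h5]) (by linarith [h6]) (by linarith [h7]) (by linarith [h8])

/-- Matrices of rank ≤ r form a closed set, but order-3 tensors of rank ≤ 2 do not:
there is a sequence of rank-≤2 tensors converging to a tensor of rank 3, so the set
{T : rank(T) ≤ 2} is not closed. -/
theorem stmt_15 (N M r : ℕ) :
    IsClosed {A : Matrix (Fin N) (Fin M) ℝ | A.rank ≤ r} ∧
    ∃ (Tseq : ℕ → Fin 2 → Fin 2 → Fin 2 → ℝ) (Tlim : Fin 2 → Fin 2 → Fin 2 → ℝ),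
      (∀ n, tensorRankLe 2 2 (Tseq n)) ∧
      Tendsto Tseq atTop (nhds Tlim) ∧
      tensorRankLe 3 2 Tlim ∧ ¬ tensorRankLe 2 2 Tlim ∧
      ¬ IsClosed {T : Fin 2 → Fin 2 → Fin 2 → ℝ | tensorRankLe 2 2 T} := by
  constructor
  · have hset : {A : Matrix (Fin N) (Fin M) ℝ | A.rank ≤ r} =
        ⋂ (f : Fin (r+1) → Fin N) (g : Fin (r+1) → Fin M),
          {A : Matrix (Fin N) (Fin M) ℝ | (A.submatrix f g).det = 0} := by
      ext A
      simp only [Set.mem_iInter, Set.mem_setOf_eq]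
      exact rank_le_iff_det r A
    rw [hset]
    exact isClosed_iInter fun f => isClosed_iInter fun g =>
      isClosed_eq ((continuous_id.matrix_submatrix f g).matrix_det) continuous_const
  · refine ⟨TseqB, TlimB, tseqB_rank, tseqB_tendsto, tlimB_rank3, tlimB_not_rank2, ?_⟩
    intro hclosed
    exact tlimB_not_rank2
      (hclosed.mem_of_tendsto tseqB_tendsto (Eventually.of_forall tseqB_rank))
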